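/- arXiv:2209.15142 — 4 statements merged into one kernel-verified Lean document; each statement's English description precedes it below -/
import Mathlib

section
/- Let P be a finite bounded poset with a CL-labeling λ, and let Ω : m₁, m₂, …, m_t be a total order on the set of all maximal chains of P. Then the following are equivalent: (1) Ω is a linear extension of the maximal chain descent order C(P,λ), i.e. m_i < m_j in C(P,λ) implies i < j; (2) Ω is a shelling order of the order complex Δ(P) whose restriction map satisfies, for every 1 ≤ j ≤ t, R(m_j) = {x ∈ m_j : m_j has a descent at x with respect to λ}. -/
/-- A maximal chain of a bounded poset `P`, recorded as a saturated chain
(a list of elements whose consecutive entries are covers) from `⊥` to `⊤`. -/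
structure MaxChain (P : Type*) [PartialOrder P] [BoundedOrder P] where
  elems : List P
  chain' : elems.Chain' (· ⋖ ·)
  head_bot : elems.head? = some ⊥
  last_top : elems.getLast? = some ⊤

variable {P : Type*} [PartialOrder P] [BoundedOrder P] [DecidableEq P]
variable {Λ : Type*} [PartialOrder Λ]

/-- `lab` is a chain-edge labeling: the label of edge `j` (the edge between
positions `j` and `j+1` of the chain, `0`-indexed) depends only on the
bottom part of the chain below that edge. -/
def IsChainEdgeLabeling (lab : MaxChain P → ℕ → Λ) : Prop :=
  ∀ m m' : MaxChain P, ∀ i : ℕ,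
    m.elems.take (i + 1) = m'.elems.take (i + 1) → ∀ j, j < i → lab m j = lab m' j

/-- `r` is a root: a saturated chain from `⊥` to `x`. -/
def IsRootTo (r : List P) (x : P) : Prop :=
  r.Chain' (· ⋖ ·) ∧ r.head? = some (⊥ : P) ∧ r.getLast? = some x

/-- `c` is a saturated chain from `x` to `y`. -/
def IsSatChain (c : List P) (x y : P) : Prop :=
  c.Chain' (· ⋖ ·) ∧ c.head? = some x ∧ c.getLast? = some y

/-- The maximal chain `m` lies in the rooted interval `[x,y]_r`, i.e. it begins
with the root `r` (whose last entry is `x`) and passes through `y`. -/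
def InRooted (m : MaxChain P) (r : List P) (y : P) : Prop :=
  m.elems.take r.length = r ∧ y ∈ m.elems

/-- The labels of `m` weakly ascend along the edges `i, i+1, …, j-1`
(the edges of the restriction of `m` between positions `i` and `j`). -/
def RestrAscending (lab : MaxChain P → ℕ → Λ) (m : MaxChain P) (i j : ℕ) : Prop :=
  ∀ k, i ≤ k → k + 2 ≤ j → lab m k ≤ lab m (k + 1)

/-- The restriction of the maximal chain `m` to the rooted interval `[x,y]_r`,
where `x` is the top of the root `r`. -/
def restrictChain (m : MaxChain P) (r : List P) (y : P) : List P :=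
  (m.elems.take (m.elems.idxOf y + 1)).drop (r.length - 1)

/-- The label sequence of `m` along edges `i, i+1, …, j-1`. -/
def restrLabels (lab : MaxChain P → ℕ → Λ) (m : MaxChain P) (i j : ℕ) : List Λ :=
  (List.range (j - i)).map fun k => lab m (i + k)

/-- The CL condition for the rooted interval with root `r` and top `y`:
there is an ascending maximal chain of the rooted interval, any two ascending
ones coincide, and the ascending one lexicographically strictly precedes every
other maximal chain of the rooted interval. -/
def CLAt (lab : MaxChain P → ℕ → Λ) (r : List P) (y : P) : Prop :=
  (∃ m : MaxChain P, InRooted m r y ∧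
      RestrAscending lab m (r.length - 1) (m.elems.idxOf y)) ∧
  (∀ m m' : MaxChain P, InRooted m r y → InRooted m' r y →
      RestrAscending lab m (r.length - 1) (m.elems.idxOf y) →
      RestrAscending lab m' (r.length - 1) (m'.elems.idxOf y) →
      restrictChain m r y = restrictChain m' r y) ∧
  (∀ m m' : MaxChain P, InRooted m r y → InRooted m' r y →
      RestrAscending lab m (r.length - 1) (m.elems.idxOf y) →
      restrictChain m r y ≠ restrictChain m' r y →
      List.Lex (· < ·) (restrLabels lab m (r.length - 1) (m.elems.idxOf y))
        (restrLabels lab m' (r.length - 1) (m'.elems.idxOf y)))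

/-- `lab` is a CL-labeling: it is a chain-edge labeling and every rooted
interval has a unique ascending maximal chain which lexicographically strictly
precedes all other maximal chains of that rooted interval. -/
def IsCLLabeling (lab : MaxChain P → ℕ → Λ) : Prop :=
  IsChainEdgeLabeling lab ∧
  ∀ (r : List P) (x y : P), IsRootTo r x → x < y → CLAt lab r y

/-- `m` increases by a polygon move to `m'`: they differ by a polygon over some
interval `[x,y]` (with `m' ∩ (x,y) = {w}` a single new element), the part of `m`
in `[x,y]` is ascending (hence, for a CL-labeling, it is the unique ascending
chain of the rooted interval), and `x ⋖ w ⋖ y` is a descent at `w`. -/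
def PolygonMove (lab : MaxChain P → ℕ → Λ) (m m' : MaxChain P) : Prop :=
  ∃ (a c b : List P) (x w y : P),
    m.elems = a ++ x :: (c ++ y :: b) ∧
    m'.elems = a ++ x :: w :: y :: b ∧
    c ≠ [] ∧ w ∉ c ∧
    RestrAscending lab m a.length (a.length + c.length + 1) ∧
    ¬ lab m' a.length ≤ lab m' (a.length + 1)

/-- The maximal chain descent order `C(P,λ)`: the reflexive–transitive closure
of increase by polygon moves. -/
def CDLe (lab : MaxChain P → ℕ → Λ) (m m' : MaxChain P) : Prop :=
  Relation.ReflTransGen (PolygonMove lab) m m'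

/-- Strict order of the maximal chain descent order. -/
def CDLt (lab : MaxChain P → ℕ → Λ) (m m' : MaxChain P) : Prop :=
  CDLe lab m m' ∧ m ≠ m'

/-- `m'` covers `m` in the maximal chain descent order. -/
def CDCovBy (lab : MaxChain P → ℕ → Λ) (m m' : MaxChain P) : Prop :=
  CDLt lab m m' ∧ ∀ z : MaxChain P, CDLt lab m z → ¬ CDLt lab z m'

/-- `lab` is polygon complete: every polygon move gives a cover relation. -/
def PolygonComplete (lab : MaxChain P → ℕ → Λ) : Prop :=
  ∀ m m' : MaxChain P, PolygonMove lab m m' → CDCovBy lab m m'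

/-- `m` has a descent at its (interior) position `i`. -/
def DescentAt (lab : MaxChain P → ℕ → Λ) (m : MaxChain P) (i : ℕ) : Prop :=
  0 < i ∧ i + 1 < m.elems.length ∧ ¬ lab m (i - 1) ≤ lab m i

/-- `m` has a descent at its interior element `z`. -/
def DescentElem (lab : MaxChain P → ℕ → Λ) (m : MaxChain P) (z : P) : Prop :=
  ∃ i : ℕ, m.elems[i]? = some z ∧ DescentAt lab m i

/-- `m` has a descending label sequence: a descent at every interior element. -/
def DescendingMC (lab : MaxChain P → ℕ → Λ) (m : MaxChain P) : Prop :=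
  ∀ i : ℕ, 0 < i → i + 1 < m.elems.length → ¬ lab m (i - 1) ≤ lab m i

/-- `m` has an ascending (weakly increasing) label sequence. -/
def AscendingMC (lab : MaxChain P → ℕ → Λ) (m : MaxChain P) : Prop :=
  ∀ i : ℕ, i + 3 ≤ m.elems.length → lab m i ≤ lab m (i + 1)

section Aux
set_option linter.unusedSectionVars false
open List

theorem MaxChain.ext' {m m' : MaxChain P} (h : m.elems = m'.elems) : m = m' := by
  cases m; cases m'; simpa using h

theorem MaxChain.pairwise_lt (m : MaxChain P) : m.elems.Pairwise (· < ·) :=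
  List.isChain_iff_pairwise.mp (m.chain'.imp fun _ _ h => h.lt)

theorem MaxChain.nodup (m : MaxChain P) : m.elems.Nodup :=
  m.pairwise_lt.imp ne_of_lt

theorem MaxChain.ne_nil (m : MaxChain P) : m.elems ≠ [] := by
  intro h; have := m.head_bot; rw [h] at this; simp at this

theorem MaxChain.length_pos (m : MaxChain P) : 0 < m.elems.length :=
  List.length_pos_iff.mpr m.ne_nil

theorem MaxChain.getElem_zero (m : MaxChain P) (h : 0 < m.elems.length) :
    m.elems[0] = ⊥ := by
  have := m.head_bot
  rw [List.head?_eq_getElem?, List.getElem?_eq_getElem h] at this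
  exact (Option.some_inj.mp this)

theorem MaxChain.getElem_last (m : MaxChain P) (h : m.elems.length - 1 < m.elems.length) :
    m.elems[m.elems.length - 1] = ⊤ := by
  have := m.last_top
  rw [List.getLast?_eq_getElem?, List.getElem?_eq_getElem h] at this
  exact (Option.some_inj.mp this)

theorem MaxChain.lt_of_index_lt (m : MaxChain P) {i j : ℕ} (hij : i < j)
    (hj : j < m.elems.length) : m.elems[i]'(hij.trans hj) < m.elems[j] :=
  List.pairwise_iff_getElem.mp m.pairwise_lt i j (hij.trans hj) hj hij

theorem MaxChain.le_of_index_le (m : MaxChain P) {i j : ℕ} (hij : i ≤ j)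
    (hj : j < m.elems.length) : m.elems[i]'(lt_of_le_of_lt hij hj) ≤ m.elems[j] := by
  rcases hij.lt_or_eq with h | h
  · exact (m.lt_of_index_lt h hj).le
  · subst h; exact le_rfl

theorem MaxChain.index_lt_of_lt (m : MaxChain P) {i j : ℕ}
    (hi : i < m.elems.length) (hj : j < m.elems.length)
    (h : m.elems[i] < m.elems[j]) : i < j := by
  by_contra hc
  exact h.not_ge (m.le_of_index_le (not_lt.mp hc) hi)

theorem MaxChain.covby_index (m : MaxChain P) {i : ℕ} (h : i + 1 < m.elems.length) :
    m.elems[i]'(Nat.lt_of_succ_lt h) ⋖ m.elems[i + 1] := by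
  have := List.isChain_iff_getElem.mp m.chain' i (by omega)
  simpa using this

end Aux

section Aux2
set_option linter.unusedSectionVars false
open List

theorem take_head?' {α : Type*} (l : List α) {p : ℕ} (hp : 0 < p) :
    (l.take p).head? = l.head? := by
  rw [head?_eq_getElem?, head?_eq_getElem?, getElem?_take, if_pos hp]

theorem take_getLast?' {α : Type*} (l : List α) {p : ℕ} (hp : 0 < p) (hl : p ≤ l.length) :
    (l.take p).getLast? = l[p - 1]? := by
  rw [getLast?_eq_getElem?, length_take, min_eq_left hl, getElem?_take, if_pos (by omega)]

theorem mem_take_iff' {α : Type*} {l : List α} {n : ℕ} {w : α} :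
    w ∈ l.take n ↔ ∃ g, ∃ _h : g < l.length, g < n ∧ l[g] = w := by
  constructor
  · intro hw
    obtain ⟨g, hg, he⟩ := mem_iff_getElem.mp hw
    have hg2 := hg
    rw [length_take] at hg2
    exact ⟨g, by omega, by omega, by rw [← List.getElem_take (xs := l) (h := hg)]; exact he⟩
  · rintro ⟨g, h, hgn, rfl⟩
    exact mem_iff_getElem.mpr ⟨g, by rw [length_take]; omega,
      List.getElem_take (xs := l) (h := by rw [length_take]; omega)⟩

theorem mem_drop_iff' {α : Type*} {l : List α} {n : ℕ} {w : α} :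
    w ∈ l.drop n ↔ ∃ g, ∃ _h : g < l.length, n ≤ g ∧ l[g] = w := by
  constructor
  · intro hw
    obtain ⟨g, hg, he⟩ := mem_iff_getElem.mp hw
    have hg2 := hg
    rw [length_drop] at hg2
    refine ⟨n + g, by omega, by omega, ?_⟩
    rw [← List.getElem_drop (xs := l) (h := hg)]; exact he
  · rintro ⟨g, h, hgn, rfl⟩
    refine mem_iff_getElem.mpr ⟨g - n, by rw [length_drop]; omega, ?_⟩
    rw [List.getElem_drop (xs := l) (h := by rw [length_drop]; omega)]
    congr 1; omega

theorem decomp3 {α : Type*} (l : List α) {p : ℕ} (hp : 0 < p) (h : p + 1 < l.length) :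
    l = l.take (p - 1) ++ l[p - 1]'(by omega) :: l[p]'(by omega) ::
      l[p + 1] :: l.drop (p + 2) := by
  conv_lhs => rw [← List.take_append_drop (p - 1) l]
  congr 1
  rw [List.drop_eq_getElem_cons (i := p - 1) (by omega)]
  congr 1
  have h1 : p - 1 + 1 = p := by omega
  rw [h1, List.drop_eq_getElem_cons (i := p) (by omega)]
  congr 1
  rw [List.drop_eq_getElem_cons (i := p + 1) (by omega)]

end Aux2

section P3
set_option linter.unusedSectionVars false
set_option maxHeartbeats 1000000
open List

theorem getElem_congr_idx' {α : Type*} {l : List α} {i j : ℕ} (h : i = j)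
    (hj : j < l.length) : l[i]'(by rw [h]; exact hj) = l[j] := by subst h; rfl

theorem polygon_construct {lab : MaxChain P → ℕ → Λ} (hCL : IsCLLabeling lab)
    (m : MaxChain P) (p : ℕ) (hd : DescentAt lab m p) {z : P}
    (hz : m.elems[p]? = some z) :
    ∃ m'' : MaxChain P, PolygonMove lab m'' m ∧ z ∉ m''.elems ∧
      ∀ w ∈ m.elems, w ≠ z → w ∈ m''.elems := by
  obtain ⟨hp0, hplen, hdesc⟩ := hd
  obtain ⟨hplt, hzeq⟩ := List.getElem?_eq_some_iff.mp hz
  have hx : p - 1 < m.elems.length := by omega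
  obtain ⟨x, hxdef⟩ : ∃ x, m.elems[p - 1] = x := ⟨_, rfl⟩
  obtain ⟨y, hydef⟩ : ∃ y, m.elems[p + 1] = y := ⟨_, rfl⟩
  have hroot : IsRootTo (m.elems.take p) x := by
    refine ⟨m.chain'.take p, ?_, ?_⟩
    · rw [take_head?' _ hp0]; exact m.head_bot
    · rw [take_getLast?' m.elems hp0 (by omega), List.getElem?_eq_getElem hx, hxdef]
  have hxz : x ⋖ z := by
    have h := m.covby_index (i := p - 1) (by omega)
    have h2 : m.elems[p - 1 + 1]'(by omega) = z :=
      (getElem_congr_idx' (by omega) hplt).trans hzeq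
    rw [← h2, ← hxdef]; exact h
  have hzy : z ⋖ y := by
    have h := m.covby_index (i := p) hplen
    rw [← hydef, ← hzeq]; exact h
  have hxy : x < y := hxz.lt.trans hzy.lt
  obtain ⟨⟨ma, ⟨hmat, hmem⟩, hasc⟩, -, -⟩ := hCL.2 (m.elems.take p) x y hroot hxy
  have hrlen : (m.elems.take p).length = p := by rw [length_take]; omega
  rw [hrlen] at hmat hasc
  obtain ⟨e, hedef⟩ : ∃ e, ma.elems.idxOf y = e := ⟨_, rfl⟩
  rw [hedef] at hasc
  have helt : e < ma.elems.length := hedef ▸ idxOf_lt_length_iff.mpr hmem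
  have hmae : ma.elems[e] = y := by
    have hlt : List.idxOf y ma.elems < ma.elems.length := hedef ▸ helt
    exact (getElem_congr_idx' hedef.symm hlt).trans (getElem_idxOf hlt)
  have hpref : ma.elems.take p = m.elems.take p := hmat
  have hplema : p ≤ ma.elems.length := by
    have h := congrArg List.length hpref
    rw [length_take, length_take] at h; omega
  have hagree : ∀ j, j < p → ma.elems[j]? = m.elems[j]? := by
    intro j hj
    have h1 : (ma.elems.take p)[j]? = (m.elems.take p)[j]? := by rw [hpref]
    rwa [getElem?_take, getElem?_take, if_pos hj, if_pos hj] at h1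
  have hmax : ma.elems[p - 1]'(by omega) = x := by
    have h := hagree (p - 1) (by omega)
    rw [List.getElem?_eq_getElem (show p - 1 < ma.elems.length by omega),
      List.getElem?_eq_getElem hx] at h
    rw [Option.some_inj.mp h, hxdef]
  have hep : p - 1 < e := by
    apply ma.index_lt_of_lt (by omega) helt
    rw [hmax, hmae]; exact hxy
  have hene : e ≠ p := by
    intro h
    have hc := ma.covby_index (i := p - 1) (by omega)
    have h2 : ma.elems[p - 1 + 1]'(by omega) = y := by
      have h3 : ma.elems[p - 1 + 1]'(by omega) = ma.elems[e]'helt :=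
        getElem_congr_idx' (by omega) helt
      rw [h3, hmae]
    rw [hmax, h2] at hc
    exact hc.2 hxz.lt hzy.lt
  have hep1 : p + 1 ≤ e := by omega
  obtain ⟨A, hAdef⟩ : ∃ A, m.elems.take (p - 1) = A := ⟨_, rfl⟩
  obtain ⟨C, hCdef⟩ : ∃ C, (ma.elems.drop p).take (e - p) = C := ⟨_, rfl⟩
  obtain ⟨suf, hsufdef⟩ : ∃ s, m.elems.drop (p + 2) = s := ⟨_, rfl⟩
  have hAlen : A.length = p - 1 := by rw [← hAdef, length_take]; omega
  have hClen : C.length = e - p := by rw [← hCdef, length_take, length_drop]; omega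
  have hCne : C ≠ [] := by
    intro h; rw [h] at hClen; simp at hClen; omega
  have hmaTakeE : ma.elems.take e = ma.elems.take p ++ C := by
    have h := List.take_add (l := ma.elems) (i := p) (j := e - p)
    rw [show p + (e - p) = e by omega, hCdef] at h
    exact h
  have hpre : ma.elems.take (e + 1) = ma.elems.take p ++ C ++ [y] := by
    rw [List.take_succ, hmaTakeE, List.getElem?_eq_getElem helt, hmae]
    simp
  have htakepl : m.elems.take p = A ++ [x] := by
    conv_lhs => rw [show p = (p - 1) + 1 by omega]
    rw [List.take_succ, List.getElem?_eq_getElem hx, hxdef, hAdef]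
    simp
  have hnl_decomp : ma.elems.take (e + 1) ++ suf = A ++ x :: (C ++ y :: suf) := by
    rw [hpre, hpref, htakepl]
    simp
  have hm_decomp : m.elems = A ++ x :: z :: y :: suf := by
    have h := decomp3 m.elems hp0 hplen
    rw [hzeq, hxdef, hydef, hAdef, hsufdef] at h
    exact h
  have hprelen : (ma.elems.take (e + 1)).length = e + 1 := by
    rw [length_take]; omega
  have hchain : (ma.elems.take (e + 1) ++ suf).Chain' (· ⋖ ·) := by
    show List.IsChain (· ⋖ ·) (ma.elems.take (e + 1) ++ suf)
    rw [List.isChain_append]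
    refine ⟨ma.chain'.take _, hsufdef ▸ m.chain'.drop _, ?_⟩
    intro a ha b hb
    rw [take_getLast?' ma.elems (by omega) (by omega), show e + 1 - 1 = e by omega,
      List.getElem?_eq_getElem helt, hmae] at ha
    rw [← hsufdef, List.head?_drop] at hb
    obtain ⟨hblt, hbeq⟩ := List.getElem?_eq_some_iff.mp hb
    have hc := m.covby_index (i := p + 1) hblt
    rw [← Option.some_inj.mp ha, ← hbeq, ← hydef]
    exact hc
  have hhead : (ma.elems.take (e + 1) ++ suf).head? = some ⊥ := by
    rw [head?_eq_getElem?, List.getElem?_append, if_pos (by rw [hprelen]; omega),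
      getElem?_take, if_pos (by omega), ← head?_eq_getElem?]
    exact ma.head_bot
  have hlast : (ma.elems.take (e + 1) ++ suf).getLast? = some ⊤ := by
    rw [List.getLast?_append]
    by_cases hsuf : suf = []
    · rw [hsuf]
      have hlen2 : m.elems.length = p + 2 := by
        have := List.drop_eq_nil_iff.mp (hsufdef.symm ▸ hsuf :
          m.elems.drop (p + 2) = [])
        omega
      have hyt : y = ⊤ := by
        have h7 : m.elems[p + 1]'(by omega) = m.elems[m.elems.length - 1]'(by omega) :=
          getElem_congr_idx' (by omega) (by omega)
        rw [← hydef, h7, m.getElem_last (by omega)]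
      rw [take_getLast?' ma.elems (by omega) (by omega), show e + 1 - 1 = e by omega,
        List.getElem?_eq_getElem helt, hmae, hyt]
      simp
    · have hsl : 0 < suf.length := List.length_pos_iff.mpr hsuf
      have hsuflen : suf.length = m.elems.length - (p + 2) := by
        rw [← hsufdef, length_drop]
      have h : suf.getLast? = some ⊤ := by
        rw [getLast?_eq_getElem?, ← hsufdef, List.getElem?_drop]
        have hlt := m.last_top
        rw [getLast?_eq_getElem?] at hlt
        rw [show p + 2 + ((m.elems.drop (p + 2)).length - 1) = m.elems.length - 1 by
          rw [length_drop]; omega]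
        exact hlt
      rw [h]
      simp
  have hzC : z ∉ C := by
    intro hmemC
    rw [← hCdef, mem_take_iff'] at hmemC
    obtain ⟨g, hg1, hg2, hg3⟩ := hmemC
    rw [List.getElem_drop] at hg3
    have hpge : p + g < e := by
      rw [length_drop] at hg1; omega
    rcases Nat.eq_zero_or_pos g with hg0 | hgpos
    · subst hg0
      have hmap : ma.elems[p]'(by omega) = z := by simpa using hg3
      rcases eq_or_lt_of_le hep1 with hE | hE
      · -- e = p + 1 : label contradiction
        have hmay : ma.elems[p + 1]'(by omega) = y :=
          (getElem_congr_idx' (show p + 1 = e by omega) helt).trans hmae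
        have hmatk2 : ma.elems.take (p + 2) = ma.elems.take p ++ [z, y] := by
          rw [show p + 2 = p + 1 + 1 from rfl, List.take_succ,
            List.take_succ (i := p),
            List.getElem?_eq_getElem (show p < ma.elems.length by omega),
            List.getElem?_eq_getElem (show p + 1 < ma.elems.length by omega),
            hmap, hmay]
          simp
        have hmtk2 : m.elems.take (p + 2) = m.elems.take p ++ [z, y] := by
          rw [show p + 2 = p + 1 + 1 from rfl, List.take_succ,
            List.take_succ (i := p),
            List.getElem?_eq_getElem hplt,
            List.getElem?_eq_getElem hplen, hzeq, hydef]
          simp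
        have htk : m.elems.take (p + 1 + 1) = ma.elems.take (p + 1 + 1) := by
          rw [show p + 1 + 1 = p + 2 from rfl, hmtk2, hmatk2, hpref]
        have hlabeq := hCL.1 m ma (p + 1) htk
        apply hdesc
        have ha := hasc (p - 1) (le_refl _) (by omega)
        rw [show p - 1 + 1 = p by omega] at ha
        rw [hlabeq (p - 1) (by omega), hlabeq p (by omega)]
        exact ha
      · -- p + 1 < e : order contradiction
        have h1 : ma.elems[p]'(by omega) ⋖ ma.elems[p + 1]'(by omega) :=
          ma.covby_index (by omega)
        have h2 : ma.elems[p + 1]'(by omega) < ma.elems[e]'helt :=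
          ma.lt_of_index_lt (by omega) helt
        rw [hmap] at h1
        rw [hmae] at h2
        exact hzy.2 h1.lt h2
    · -- g ≥ 1 : order contradiction
      have h1 : ma.elems[p - 1]'(by omega) < ma.elems[p]'(by omega) :=
        ma.lt_of_index_lt (by omega) (by omega)
      have h2 : ma.elems[p]'(by omega) < ma.elems[p + g]'(by omega) :=
        ma.lt_of_index_lt (by omega) (by omega)
      rw [hmax] at h1
      rw [hg3] at h2
      exact hxz.2 h1 h2
  have hm''take : (ma.elems.take (e + 1) ++ suf).take (e + 1) = ma.elems.take (e + 1) := by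
    rw [take_append_of_le_length (by rw [hprelen]), take_take, min_self]
  refine ⟨⟨ma.elems.take (e + 1) ++ suf, hchain, hhead, hlast⟩, ?_, ?_, ?_⟩
  · refine ⟨A, C, suf, x, z, y, hnl_decomp, hm_decomp, hCne, hzC, ?_, ?_⟩
    · intro k hk1 hk2
      rw [hAlen] at hk1
      rw [hAlen, hClen] at hk2
      have hke : k + 2 ≤ e := by omega
      have hlabeq2 := hCL.1 ⟨ma.elems.take (e + 1) ++ suf, hchain, hhead, hlast⟩ ma e hm''take
      rw [hlabeq2 k (by omega), hlabeq2 (k + 1) (by omega)]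
      exact hasc k (by omega) hke
    · rw [hAlen, show p - 1 + 1 = p by omega]
      exact hdesc
  · intro hmm
    replace hmm : z ∈ ma.elems.take (e + 1) ++ suf := hmm
    rw [hnl_decomp] at hmm
    simp only [List.mem_append, List.mem_cons] at hmm
    rcases hmm with hA | hX | hC | hY | hS
    · rw [← hAdef, mem_take_iff'] at hA
      obtain ⟨g, hg, hgp, hgz⟩ := hA
      have : g = p := m.nodup.getElem_inj_iff.mp (hgz.trans hzeq.symm)
      omega
    · have : p - 1 = p := m.nodup.getElem_inj_iff.mp (hxdef.trans (hX.symm.trans hzeq.symm))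
      omega
    · exact hzC hC
    · have : p + 1 = p := m.nodup.getElem_inj_iff.mp (hydef.trans (hY.symm.trans hzeq.symm))
      omega
    · rw [← hsufdef, mem_drop_iff'] at hS
      obtain ⟨g, hg, hgp, hgz⟩ := hS
      have : g = p := m.nodup.getElem_inj_iff.mp (hgz.trans hzeq.symm)
      omega
  · intro w hw hne
    obtain ⟨g, hg, hgw⟩ := mem_iff_getElem.mp hw
    show w ∈ ma.elems.take (e + 1) ++ suf
    rw [hnl_decomp]
    simp only [List.mem_append, List.mem_cons]
    rcases Nat.lt_or_ge g (p - 1) with h1 | h1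
    · exact Or.inl (by rw [← hAdef]; exact mem_take_iff'.mpr ⟨g, hg, h1, hgw⟩)
    rcases eq_or_lt_of_le h1 with h2 | h2
    · refine Or.inr (Or.inl ?_)
      rw [← hgw, ← hxdef]
      exact getElem_congr_idx' (l := m.elems) h2.symm hx
    rcases Nat.lt_or_ge g (p + 2) with h3 | h3
    · -- g = p or g = p + 1
      rcases Nat.lt_or_ge g (p + 1) with h4 | h4
      · -- g = p : contradiction with hne
        exfalso
        apply hne
        rw [← hgw, ← hzeq]
        exact getElem_congr_idx' (l := m.elems) (by omega) hplt
      · refine Or.inr (Or.inr (Or.inr (Or.inl ?_)))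
        rw [← hgw, ← hydef]
        exact getElem_congr_idx' (l := m.elems) (by omega) hplen
    · refine Or.inr (Or.inr (Or.inr (Or.inr ?_)))
      rw [← hsufdef]
      exact mem_drop_iff'.mpr ⟨g, hg, h3, hgw⟩

end P3

section P4
set_option linter.unusedSectionVars false
set_option maxHeartbeats 1000000
open List

theorem PolygonMove.ne' {lab : MaxChain P → ℕ → Λ} {m m' : MaxChain P}
    (h : PolygonMove lab m m') : m ≠ m' := by
  obtain ⟨a, c, b, x, w, y, h1, h2, hc, hw, -, -⟩ := h
  intro he
  rw [← he, h1] at h2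
  have h3 := List.append_cancel_left h2
  rw [List.cons.injEq] at h3
  have h4 := h3.2
  cases c with
  | nil => exact hc rfl
  | cons c0 cs =>
    rw [List.cons_append, List.cons.injEq] at h4
    exact hw (h4.1 ▸ List.mem_cons_self)

theorem PolygonMove.cdlt {lab : MaxChain P → ℕ → Λ} {m m' : MaxChain P}
    (h : PolygonMove lab m m') : CDLt lab m m' :=
  ⟨Relation.ReflTransGen.single h, h.ne'⟩

theorem DescentElem.mem {lab : MaxChain P → ℕ → Λ} {m : MaxChain P} {z : P}
    (h : DescentElem lab m z) : z ∈ m.elems := by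
  obtain ⟨i, hi, -⟩ := h
  obtain ⟨h1, h2⟩ := List.getElem?_eq_some_iff.mp hi
  exact h2 ▸ List.mem_iff_getElem.mpr ⟨i, h1, rfl⟩

theorem straighten {lab : MaxChain P → ℕ → Λ} (hCL : IsCLLabeling lab)
    {t : ℕ} {F : Fin t → MaxChain P} (hF : Function.Bijective F)
    (hA : ∀ i j : Fin t, CDLt lab (F i) (F j) → i < j) :
    ∀ (N : ℕ) (m n : MaxChain P), ((Equiv.ofBijective F hF).symm m : ℕ) ≤ N →
      (∀ z, DescentElem lab n z → z ∈ m.elems) → CDLe lab n m := by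
  intro N
  induction N using Nat.strong_induction_on with
  | _ N IH =>
  intro m n hidx hdes
  by_cases hmn : n = m
  · exact hmn ▸ Relation.ReflTransGen.refl
  -- first differing position d
  have hex : ∃ d : ℕ, m.elems[d]? ≠ n.elems[d]? := by
    by_contra h
    push_neg at h
    exact hmn (MaxChain.ext' (List.ext_getElem? h)).symm
  have hdspec := Nat.find_spec hex
  have hdmin : ∀ j, j < Nat.find hex → m.elems[j]? = n.elems[j]? :=
    fun j hj => not_not.mp (Nat.find_min hex hj)
  obtain ⟨d, hddef⟩ : ∃ d, Nat.find hex = d := ⟨_, rfl⟩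
  rw [hddef] at hdspec hdmin
  have hd0 : 0 < d := by
    rcases Nat.eq_zero_or_pos d with h | h
    · exfalso
      apply hdspec
      rw [h, List.getElem?_eq_getElem m.length_pos, List.getElem?_eq_getElem n.length_pos,
        m.getElem_zero m.length_pos, n.getElem_zero n.length_pos]
    · exact h
  have htopn : (⊤ : P) ∈ n.elems :=
    List.mem_iff_getElem.mpr ⟨n.elems.length - 1, by have := n.length_pos; omega,
      n.getElem_last (by have := n.length_pos; omega)⟩
  have htopm : (⊤ : P) ∈ m.elems :=
    List.mem_iff_getElem.mpr ⟨m.elems.length - 1, by have := m.length_pos; omega,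
      m.getElem_last (by have := m.length_pos; omega)⟩
  -- d is within both chains
  have hdlm : d < m.elems.length := by
    by_contra hc
    push_neg at hc
    have h1 : m.elems.length - 1 < d := by have := m.length_pos; omega
    have h2 := hdmin (m.elems.length - 1) h1
    have hdln : d < n.elems.length := by
      by_contra hc2
      push_neg at hc2
      apply hdspec
      rw [List.getElem?_eq_none (by omega), List.getElem?_eq_none (by omega)]
    have h3 : n.elems[m.elems.length - 1]'(by omega) = ⊤ := by
      have h4 := h2
      rw [List.getElem?_eq_getElem (by have := m.length_pos; omega : m.elems.length - 1 < m.elems.length),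
        List.getElem?_eq_getElem (by omega : m.elems.length - 1 < n.elems.length)] at h4
      rw [← Option.some_inj.mp h4, m.getElem_last (by have := m.length_pos; omega)]
    have h5 : n.elems[m.elems.length - 1]'(by omega) < n.elems[n.elems.length - 1]'(by have := n.length_pos; omega) :=
      n.lt_of_index_lt (by omega) (by have := n.length_pos; omega)
    rw [h3, n.getElem_last (by have := n.length_pos; omega)] at h5
    exact absurd h5 (lt_irrefl _)
  have hdln : d < n.elems.length := by
    by_contra hc
    push_neg at hc
    have h1 : n.elems.length - 1 < d := by have := n.length_pos; omega
    have h2 := hdmin (n.elems.length - 1) h1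
    have h3 : m.elems[n.elems.length - 1]'(by omega) = ⊤ := by
      have h4 := h2
      rw [List.getElem?_eq_getElem (by omega : n.elems.length - 1 < m.elems.length),
        List.getElem?_eq_getElem (by have := n.length_pos; omega : n.elems.length - 1 < n.elems.length)] at h4
      rw [Option.some_inj.mp h4, n.getElem_last (by have := n.length_pos; omega)]
    have h5 : m.elems[n.elems.length - 1]'(by omega) < m.elems[m.elems.length - 1]'(by have := m.length_pos; omega) :=
      m.lt_of_index_lt (by omega) (by have := m.length_pos; omega)
    rw [h3, m.getElem_last (by have := m.length_pos; omega)] at h5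
    exact absurd h5 (lt_irrefl _)
  have hne_d : m.elems[d] ≠ n.elems[d] := by
    intro h
    apply hdspec
    rw [List.getElem?_eq_getElem hdlm, List.getElem?_eq_getElem hdln, h]
  have hagree : ∀ j (hj : j < d), m.elems[j]'(by omega) = n.elems[j]'(by omega) := by
    intro j hj
    have h := hdmin j hj
    rw [List.getElem?_eq_getElem (by omega : j < m.elems.length),
      List.getElem?_eq_getElem (by omega : j < n.elems.length)] at h
    exact Option.some_inj.mp h
  -- least common element position above d in m
  have hex2 : ∃ g, d ≤ g ∧ ∃ _h : g < m.elems.length, m.elems[g] ∈ n.elems := by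
    exact ⟨m.elems.length - 1, by omega, by omega,
      by rw [m.getElem_last (by omega)]; exact htopn⟩
  have hespec := Nat.find_spec hex2
  have hemin := fun g (hg : g < Nat.find hex2) => Nat.find_min hex2 hg
  obtain ⟨e, hedef⟩ : ∃ e, Nat.find hex2 = e := ⟨_, rfl⟩
  rw [hedef] at hespec hemin
  obtain ⟨hde, helm, hmemv⟩ := hespec
  obtain ⟨v, hveq⟩ : ∃ v, m.elems[e] = v := ⟨_, rfl⟩
  rw [hveq] at hmemv
  obtain ⟨f, hfl, hfv⟩ := List.mem_iff_getElem.mp hmemv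
  have hfd : d - 1 < f := by
    apply n.index_lt_of_lt (by omega) hfl
    rw [hfv, ← hveq, ← hagree (d - 1) (by omega)]
    exact m.lt_of_index_lt (by omega) helm
  have hed1 : d + 1 ≤ e := by
    rcases eq_or_lt_of_le hde with h | h
    · exfalso
      have hfd' : f ≠ d := by
        intro hf
        apply hne_d
        have c1 : m.elems[d]'hdlm = m.elems[e]'helm := getElem_congr_idx' (l := m.elems) h helm
        have c2 : n.elems[f]'hfl = n.elems[d]'hdln := getElem_congr_idx' (l := n.elems) hf hdln
        exact (c1.trans hveq).trans (hfv.symm.trans c2)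
      have hcov := m.covby_index (i := d - 1) (by omega)
      have hi1 : n.elems[d - 1]'(by omega) < n.elems[d]'hdln :=
        n.lt_of_index_lt (by omega) hdln
      have hi2 : n.elems[d]'hdln < n.elems[f]'hfl :=
        n.lt_of_index_lt (by omega) hfl
      rw [hfv, ← hveq] at hi2
      have c3 : m.elems[e]'helm = m.elems[d]'hdlm := getElem_congr_idx' (l := m.elems) h.symm hdlm
      rw [c3] at hi2
      rw [← hagree (d - 1) (by omega)] at hi1
      have hcov' : m.elems[d - 1]'(by omega) ⋖ m.elems[d]'hdlm := by
        have hcc : m.elems[d - 1 + 1]'(by omega) = m.elems[d]'hdlm :=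
          getElem_congr_idx' (l := m.elems) (by omega) hdlm
        rw [← hcc]; exact hcov
      exact hcov'.2 hi1 hi2
    · omega
  have hfd1 : d + 1 ≤ f := by
    rcases eq_or_lt_of_le (show d ≤ f by omega) with h | h
    · exfalso
      have hi1 : m.elems[d - 1]'(by omega) < m.elems[d]'hdlm :=
        m.lt_of_index_lt (by omega) hdlm
      have hi2 : m.elems[d]'hdlm < m.elems[e]'helm :=
        m.lt_of_index_lt (by omega) helm
      rw [hveq, ← hfv] at hi2
      have c3 : n.elems[f]'hfl = n.elems[d]'hdln := getElem_congr_idx' (l := n.elems) h.symm hdln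
      rw [c3] at hi2
      rw [hagree (d - 1) (by omega)] at hi1
      have hcov := n.covby_index (i := d - 1) (by omega)
      have hcc : n.elems[d - 1 + 1]'(by omega) = n.elems[d]'hdln :=
        getElem_congr_idx' (l := n.elems) (by omega) hdln
      rw [hcc] at hcov
      exact hcov.2 hi1 hi2
    · omega
  -- the root
  have hrlen : (m.elems.take d).length = d := by rw [length_take]; omega
  have htaken : n.elems.take d = m.elems.take d := by
    apply List.ext_getElem?
    intro j
    rw [getElem?_take, getElem?_take]
    split
    · exact (hdmin j ‹_›).symm
    · rfl
  have hroot : IsRootTo (m.elems.take d) (m.elems[d - 1]'(by omega)) := by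
    refine ⟨m.chain'.take d, ?_, ?_⟩
    · rw [take_head?' _ hd0]; exact m.head_bot
    · rw [take_getLast?' m.elems hd0 (by omega), List.getElem?_eq_getElem (by omega : d - 1 < m.elems.length)]
  have huv : m.elems[d - 1]'(by omega) < v := by
    rw [← hveq]; exact m.lt_of_index_lt (by omega) helm
  obtain ⟨-, huniq, -⟩ := hCL.2 (m.elems.take d) _ v hroot huv
  have hiem : m.elems.idxOf v = e := by
    have h1 : m.elems.idxOf v < m.elems.length := idxOf_lt_length_iff.mpr (hveq ▸ List.mem_iff_getElem.mpr ⟨e, helm, rfl⟩)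
    have h2 : m.elems[m.elems.idxOf v]'h1 = m.elems[e]'helm := by
      rw [getElem_idxOf h1, hveq]
    exact m.nodup.getElem_inj_iff.mp h2
  have hien : n.elems.idxOf v = f := by
    have h1 : n.elems.idxOf v < n.elems.length := idxOf_lt_length_iff.mpr hmemv
    have h2 : n.elems[n.elems.idxOf v]'h1 = n.elems[f]'hfl := by
      rw [getElem_idxOf h1, hfv]
    exact n.nodup.getElem_inj_iff.mp h2
  by_cases hascm : RestrAscending lab m (d - 1) e
  · -- m ascending on the gap: n must have a descent inside the gap, contradiction
    exfalso
    by_cases hascn : RestrAscending lab n (d - 1) f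
    · -- both ascending: uniqueness forces equality at position d
      have hrm : InRooted m (m.elems.take d) v := by
        constructor
        · rw [hrlen]
        · exact hveq ▸ List.mem_iff_getElem.mpr ⟨e, helm, rfl⟩
      have hrn : InRooted n (m.elems.take d) v := by
        constructor
        · rw [hrlen]; exact htaken
        · exact hmemv
      have hascm' : RestrAscending lab m ((m.elems.take d).length - 1) (m.elems.idxOf v) := by
        rw [hrlen, hiem]; exact hascm
      have hascn' : RestrAscending lab n ((m.elems.take d).length - 1) (n.elems.idxOf v) := by
        rw [hrlen, hien]; exact hascn
      have hrc := huniq m n hrm hrn hascm' hascn'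
      have hc1 : (restrictChain m (m.elems.take d) v)[1]? = some (m.elems[d]'hdlm) := by
        show ((m.elems.take (m.elems.idxOf v + 1)).drop ((m.elems.take d).length - 1))[1]? = _
        rw [hiem, hrlen, List.getElem?_drop, getElem?_take,
          if_pos (by omega : d - 1 + 1 < e + 1), show d - 1 + 1 = d by omega,
          List.getElem?_eq_getElem hdlm]
      have hc2 : (restrictChain n (m.elems.take d) v)[1]? = some (n.elems[d]'hdln) := by
        show ((n.elems.take (n.elems.idxOf v + 1)).drop ((m.elems.take d).length - 1))[1]? = _
        rw [hien, hrlen, List.getElem?_drop, getElem?_take,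
          if_pos (by omega : d - 1 + 1 < f + 1), show d - 1 + 1 = d by omega,
          List.getElem?_eq_getElem hdln]
      rw [hrc, hc2] at hc1
      exact hne_d (Option.some_inj.mp hc1).symm
    · -- n has a descent strictly inside the gap
      simp only [RestrAscending, not_forall] at hascn
      obtain ⟨k, hk1, hk2, hk3⟩ := hascn
      have hq : DescentAt lab n (k + 1) :=
        ⟨by omega, by omega, by rw [show k + 1 - 1 = k by omega]; exact hk3⟩
      have hzel : DescentElem lab n (n.elems[k + 1]'(by omega)) :=
        ⟨k + 1, List.getElem?_eq_getElem (by omega), hq⟩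
      have hzm := hdes _ hzel
      obtain ⟨g, hgl, hge⟩ := List.mem_iff_getElem.mp hzm
      have hg1 : d ≤ g := by
        have : m.elems[d - 1]'(by omega) < m.elems[g]'hgl := by
          rw [hge, hagree (d - 1) (by omega)]
          exact n.lt_of_index_lt (by omega) (by omega)
        have := m.index_lt_of_lt (by omega) hgl this
        omega
      have hg2 : g < e := by
        apply m.index_lt_of_lt hgl helm
        have h6 : n.elems[k + 1]'(by omega) < n.elems[f]'hfl := n.lt_of_index_lt (by omega) hfl
        rw [hfv] at h6
        rw [hge, hveq]
        exact h6
      exact hemin g hg2 ⟨hg1, hgl, hge ▸ List.mem_iff_getElem.mpr ⟨k + 1, by omega, rfl⟩⟩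
  · -- m has a descent strictly inside the gap: polygon move down
    simp only [RestrAscending, not_forall] at hascm
    obtain ⟨k, hk1, hk2, hk3⟩ := hascm
    have hp : DescentAt lab m (k + 1) :=
      ⟨by omega, by omega, by rw [show k + 1 - 1 = k by omega]; exact hk3⟩
    obtain ⟨m'', hpm, hnotin, hsub⟩ :=
      polygon_construct hCL m (k + 1) hp (List.getElem?_eq_getElem (by omega))
    have hwn : m.elems[k + 1]'(by omega) ∉ n.elems := by
      intro hcon
      exact hemin (k + 1) (by omega) ⟨by omega, by omega, hcon⟩
    have hcd : CDLt lab m'' m := hpm.cdlt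
    set eqv := Equiv.ofBijective F hF with heqv
    have hlt : (eqv.symm m'' : ℕ) < (eqv.symm m : ℕ) := by
      have h := hA (eqv.symm m'') (eqv.symm m) (by
        rw [show F (eqv.symm m'') = m'' from eqv.apply_symm_apply m'',
          show F (eqv.symm m) = m from eqv.apply_symm_apply m]
        exact hcd)
      exact h
    have hIH := IH (eqv.symm m'' : ℕ) (by omega) m'' n (le_refl _) (by
      intro z hz
      exact hsub z (hdes z hz) (by
        intro hzz
        exact hwn (hzz ▸ hz.mem)))
    exact Relation.ReflTransGen.tail hIH hpm

end P4

/-- for a finite bounded poset `P` with a CL-labeling `lab` and a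
total order (enumeration) `F` of all maximal chains of `P`, the following are
equivalent: (1) the enumeration is a linear extension of the maximal chain
descent order `C(P,λ)`; (2) the enumeration is a shelling order of the order
complex `Δ(P)` whose restriction map sends each maximal chain to its set of
descent elements with respect to `lab`. -/
theorem statement0 [Fintype P] (lab : MaxChain P → ℕ → Λ) (hCL : IsCLLabeling lab)
    (t : ℕ) (F : Fin t → MaxChain P) (hF : Function.Bijective F) :
    (∀ i j : Fin t, CDLt lab (F i) (F j) → i < j)
      ↔
    ((∀ i j : Fin t, i < j → ∃ k : Fin t, k < j ∧ ∃ z ∈ (F j).elems,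
        ((F i).elems.toFinset ∩ (F j).elems.toFinset ⊆
            (F k).elems.toFinset ∩ (F j).elems.toFinset) ∧
          (F k).elems.toFinset ∩ (F j).elems.toFinset =
            (F j).elems.toFinset.erase z) ∧
      (∀ (j : Fin t) (z : P),
        (z ∈ (F j).elems ∧ ∃ i : Fin t, i < j ∧
            (F j).elems.toFinset.erase z ⊆ (F i).elems.toFinset)
          ↔ DescentElem lab (F j) z)) := by
  have hFsymm : ∀ mm : MaxChain P, F ((Equiv.ofBijective F hF).symm mm) = mm :=
    fun mm => (Equiv.ofBijective F hF).apply_symm_apply mm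
  have hsymmF : ∀ i : Fin t, (Equiv.ofBijective F hF).symm (F i) = i :=
    fun i => (Equiv.ofBijective F hF).symm_apply_apply i
  constructor
  · intro hA
    constructor
    · -- shelling condition
      intro i j hij
      by_cases hz : ∃ z, DescentElem lab (F j) z ∧ z ∉ (F i).elems
      · obtain ⟨z, hzd, hzi⟩ := hz
        obtain ⟨q, hq, hqd⟩ := hzd
        obtain ⟨m'', hpm, hnotin, hsub⟩ := polygon_construct hCL (F j) q hqd hq
        have hkj : (Equiv.ofBijective F hF).symm m'' < j := by
          apply hA
          rw [hFsymm]
          exact hpm.cdlt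
        have hzmem : z ∈ (F j).elems := DescentElem.mem ⟨q, hq, hqd⟩
        refine ⟨(Equiv.ofBijective F hF).symm m'', hkj, z, hzmem, ?_, ?_⟩
        · intro w hw
          simp only [Finset.mem_inter, List.mem_toFinset] at hw ⊢
          refine ⟨?_, hw.2⟩
          rw [hFsymm]
          exact hsub w hw.2 (fun hwz => hzi (hwz ▸ hw.1))
        · ext w
          simp only [Finset.mem_inter, Finset.mem_erase, List.mem_toFinset, hFsymm]
          constructor
          · rintro ⟨h1, h2⟩
            exact ⟨fun hwz => hnotin (hwz ▸ h1), h2⟩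
          · rintro ⟨h1, h2⟩
            exact ⟨hsub w h2 h1, h2⟩
      · push_neg at hz
        exfalso
        have hle := straighten hCL hF hA ((Equiv.ofBijective F hF).symm (F i) : ℕ)
          (F i) (F j) le_rfl hz
        have hne : F j ≠ F i := fun h => absurd (hF.1 h) hij.ne'
        have hji := hA j i ⟨hle, hne⟩
        exact absurd hij (not_lt.mpr hji.le)
    · -- restriction condition
      intro j z
      constructor
      · rintro ⟨hzj, i, hij, hsub⟩
        by_contra hnd
        have hall : ∀ w, DescentElem lab (F j) w → w ∈ (F i).elems := by
          intro w hw
          have hwz : w ≠ z := fun h => hnd (h ▸ hw)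
          exact List.mem_toFinset.mp
            (hsub (Finset.mem_erase.mpr ⟨hwz, List.mem_toFinset.mpr hw.mem⟩))
        have hle := straighten hCL hF hA ((Equiv.ofBijective F hF).symm (F i) : ℕ)
          (F i) (F j) le_rfl hall
        have hne : F j ≠ F i := fun h => absurd (hF.1 h) hij.ne'
        have hji := hA j i ⟨hle, hne⟩
        exact absurd hij (not_lt.mpr hji.le)
      · intro hzd
        obtain ⟨q, hq, hqd⟩ := hzd
        obtain ⟨m'', hpm, hnotin, hsub⟩ := polygon_construct hCL (F j) q hqd hq
        have hkj : (Equiv.ofBijective F hF).symm m'' < j := by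
          apply hA
          rw [hFsymm]
          exact hpm.cdlt
        refine ⟨DescentElem.mem ⟨q, hq, hqd⟩, (Equiv.ofBijective F hF).symm m'', hkj, ?_⟩
        intro w hw
        rw [Finset.mem_erase, List.mem_toFinset] at hw
        rw [List.mem_toFinset, hFsymm]
        exact hsub w hw.2 hw.1
  · rintro ⟨hB, hC⟩
    have key : ∀ m m' : MaxChain P, PolygonMove lab m m' →
        (Equiv.ofBijective F hF).symm m < (Equiv.ofBijective F hF).symm m' := by
      intro m m' hpm
      by_contra hc
      push_neg at hc
      have hne : (Equiv.ofBijective F hF).symm m' ≠ (Equiv.ofBijective F hF).symm m :=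
        fun h => hpm.ne' ((Equiv.ofBijective F hF).symm.injective h).symm
      have hlt : (Equiv.ofBijective F hF).symm m' < (Equiv.ofBijective F hF).symm m :=
        lt_of_le_of_ne hc hne
      obtain ⟨k, hk, z, hzmem, hsub, heq⟩ :=
        hB ((Equiv.ofBijective F hF).symm m') ((Equiv.ofBijective F hF).symm m) hlt
      simp only [hFsymm] at hzmem hsub heq
      have hdz : DescentElem lab m z := by
        have h := (hC ((Equiv.ofBijective F hF).symm m) z)
        rw [hFsymm] at h
        apply h.mp
        refine ⟨hzmem, k, hk, ?_⟩
        rw [← heq]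
        exact Finset.inter_subset_left
      have hzm' : z ∉ m'.elems := by
        intro hcon
        have h := hsub (Finset.mem_inter.mpr
          ⟨List.mem_toFinset.mpr hcon, List.mem_toFinset.mpr hzmem⟩)
        rw [heq] at h
        exact (Finset.mem_erase.mp h).1 rfl
      obtain ⟨a, c, b, x, w, y, h1, h2, hcne, hwc, hasc, hdesc⟩ := hpm
      have hzc : z ∈ c := by
        have hz1 : z ∈ m.elems := hzmem
        rw [h1] at hz1
        simp only [List.mem_append, List.mem_cons] at hz1
        rcases hz1 with h | h | h | h | h
        · exact absurd (by rw [h2]; simp [h] : z ∈ m'.elems) hzm'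
        · exact absurd (by rw [h2]; simp [h] : z ∈ m'.elems) hzm'
        · exact h
        · exact absurd (by rw [h2]; simp [h] : z ∈ m'.elems) hzm'
        · exact absurd (by rw [h2]; simp [h] : z ∈ m'.elems) hzm'
      obtain ⟨g, hgl, hge⟩ := List.mem_iff_getElem.mp hzc
      have hmz : m.elems[a.length + 1 + g]? = some z := by
        rw [h1, List.getElem?_append, if_neg (by omega),
          show a.length + 1 + g - a.length = g + 1 by omega,
          List.getElem?_cons_succ, List.getElem?_append, if_pos hgl,
          List.getElem?_eq_getElem hgl, hge]
      obtain ⟨q, hq, hqd⟩ := hdz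
      have hqe : q = a.length + 1 + g := by
        obtain ⟨hql, hqz⟩ := List.getElem?_eq_some_iff.mp hq
        obtain ⟨hql2, hqz2⟩ := List.getElem?_eq_some_iff.mp hmz
        exact m.nodup.getElem_inj_iff.mp (hqz.trans hqz2.symm)
      obtain ⟨hq0, hq1, hq2⟩ := hqd
      apply hq2
      have h3 := hasc (q - 1) (by omega) (by omega)
      rwa [show q - 1 + 1 = q by omega] at h3
    intro i j hij
    obtain ⟨hle, hne⟩ := hij
    have hmono : ∀ m m' : MaxChain P, CDLe lab m m' →
        (Equiv.ofBijective F hF).symm m ≤ (Equiv.ofBijective F hF).symm m' := by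
      intro m m' h
      induction h with
      | refl => exact le_rfl
      | tail h1 h2 ih => exact ih.trans (key _ _ h2).le
    have h1 := hmono _ _ hle
    rw [hsymmF, hsymmF] at h1
    have h2 : i ≠ j := fun h => hne (h ▸ rfl)
    exact lt_of_le_of_ne h1 h2
end

section
/- Let P be a finite bounded poset with a CL-labeling λ. If a maximal chain m of P has a descending label sequence with respect to λ (i.e. m has a descent at every interior element), then m is a maximal element of the maximal chain descent order C(P,λ): there is no maximal chain m' of P with m < m' in C(P,λ). -/
variable {P : Type*} [PartialOrder P] [BoundedOrder P] [DecidableEq P]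
variable {Λ : Type*} [PartialOrder Λ]

/-- if a maximal chain of a finite bounded poset with a
CL-labeling has a descending label sequence, then it is a maximal element of
the maximal chain descent order. -/
theorem statement2 [Fintype P] (lab : MaxChain P → ℕ → Λ) (hCL : IsCLLabeling lab)
    (m : MaxChain P) (hm : DescendingMC lab m) :
    ¬ ∃ m' : MaxChain P, CDLt lab m m' := by
  rintro ⟨m', hle, hne⟩
  rcases hle.cases_head with rfl | ⟨z, hpm, -⟩
  · exact hne rfl
  · obtain ⟨a, c, b, x, w, y, hm1, -, hc, -, hasc, -⟩ := hpm
    have hcpos : 0 < c.length := List.length_pos_iff.mpr hc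
    have h1 : lab m a.length ≤ lab m (a.length + 1) :=
      hasc a.length le_rfl (by omega)
    have hlen : a.length + 1 + 1 < m.elems.length := by
      rw [hm1]; simp; omega
    have h2 := hm (a.length + 1) (by omega) hlen
    simp at h2
    exact h2 h1
end

section
/- Let P be a finite bounded poset in which every maximal chain has length at most two, and let λ be a CL-labeling of P. Then λ is polygon complete: whenever m → m', the chain m' covers m in the maximal chain descent order C(P,λ). -/
variable {P : Type*} [PartialOrder P] [BoundedOrder P] [DecidableEq P]
variable {Λ : Type*} [PartialOrder Λ]

lemma poly_facts (lab : MaxChain P → ℕ → Λ)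
    (hlen : ∀ m : MaxChain P, m.elems.length ≤ 3)
    {p q : MaxChain P} (h : PolygonMove lab p q) :
    lab p 0 ≤ lab p 1 ∧ ¬ lab q 0 ≤ lab q 1 ∧ p ≠ q := by
  obtain ⟨a, c, b, x, w, y, hp, hq, hc, hw, hasc, hdesc⟩ := h
  have hlp := hlen p
  rw [hp] at hlp
  simp only [List.length_append, List.length_cons] at hlp
  have hc1 : 1 ≤ c.length := List.length_pos_iff.mpr hc
  have ha : a.length = 0 := by omega
  have hb : b.length = 0 := by omega
  have hcl : c.length = 1 := by omega
  obtain ⟨z, rfl⟩ := List.length_eq_one_iff.mp hcl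
  have ha' : a = [] := List.length_eq_zero_iff.mp ha
  have hb' : b = [] := List.length_eq_zero_iff.mp hb
  subst ha' hb'
  refine ⟨?_, ?_, ?_⟩
  · exact hasc 0 (Nat.zero_le _) (by simp)
  · simpa using hdesc
  · intro hpq
    rw [hpq, hq] at hp
    simp at hp
    exact hw (by simp [hp])

/-- if every maximal chain of `P` has length at most two, then
every CL-labeling of `P` is polygon complete. -/
theorem statement8 [Fintype P] (lab : MaxChain P → ℕ → Λ)
    (hlen : ∀ m : MaxChain P, m.elems.length ≤ 3)
    (hCL : IsCLLabeling lab) :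
    PolygonComplete lab := by
  intro m m' hmm
  obtain ⟨h1, h2, h3⟩ := poly_facts lab hlen hmm
  refine ⟨⟨Relation.ReflTransGen.single hmm, h3⟩, ?_⟩
  rintro z ⟨hz, hne⟩ ⟨hz', hne'⟩
  rcases Relation.ReflTransGen.cases_head hz with rfl | ⟨n, hmn, hnz⟩
  · exact hne rfl
  rcases Relation.ReflTransGen.cases_head hnz with rfl | ⟨n2, hn2, _⟩
  · rcases Relation.ReflTransGen.cases_head hz' with rfl | ⟨n3, hzn3, _⟩
    · exact hne' rfl
    · exact (poly_facts lab hlen hmn).2.1 (poly_facts lab hlen hzn3).1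
  · exact (poly_facts lab hlen hmn).2.1 (poly_facts lab hlen hn2).1
end

section
/- Let P be a finite bounded poset with a CL-labeling λ. Let m and m' be maximal chains of P whose bottom i elements form a common saturated chain 0̂ = y₀ ⋖ y₁ ⋖ ⋯ ⋖ y_{i−1}, and suppose the element of m covering y_{i−1} differs from the element of m' covering y_{i−1}. If m = m₀ → m₁ → ⋯ → m_k → m_{k+1} = m' is any sequence of polygon moves from m to m', then m_j ∩ [0̂, y_{i−1}] = m ∩ [0̂, y_{i−1}] for every 1 ≤ j ≤ k. -/
variable {P : Type*} [PartialOrder P] [BoundedOrder P] [DecidableEq P]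
variable {Λ : Type*} [PartialOrder Λ]

section Statement9Helpers
set_option linter.unusedSectionVars false
set_option linter.unusedVariables false

private lemma lex_irrefl' : ∀ u : List Λ, ¬ List.Lex (· < ·) u u := by
  intro u
  induction u with
  | nil => intro h; cases h
  | cons a t ih =>
    intro h
    cases h with
    | cons h => exact ih h
    | rel h => exact lt_irrefl _ h

private lemma lex_trans' : ∀ {u v w : List Λ},
    List.Lex (· < ·) u v → List.Lex (· < ·) v w → List.Lex (· < ·) u w := by
  intro u v w h1
  induction h1 generalizing w with
  | nil =>
    intro h2
    cases h2 with
    | cons _ => exact List.Lex.nil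
    | rel _ => exact List.Lex.nil
  | @rel a l₁ b l₂ hab =>
    intro h2
    cases h2 with
    | cons _ => exact List.Lex.rel hab
    | rel hbc => exact List.Lex.rel (lt_trans hab hbc)
  | @cons a l₁ l₂ h ih =>
    intro h2
    cases h2 with
    | cons h' => exact List.Lex.cons (ih h')
    | rel hbc => exact List.Lex.rel hbc

private lemma exists_firstdiff : ∀ {u v : List Λ}, List.Lex (· < ·) u v →
    v.length ≤ u.length →
    ∃ p, ∃ (hu : p < u.length) (hv : p < v.length),
      u.take p = v.take p ∧ u[p] < v[p] := by
  intro u v h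
  induction h with
  | nil => intro hlen; simp at hlen
  | @rel a l₁ b l₂ hab =>
    intro _
    exact ⟨0, by simp, by simp, rfl, by simpa using hab⟩
  | @cons a l₁ l₂ h ih =>
    intro hlen
    obtain ⟨p, hu, hv, ht, hlt⟩ := ih (by simpa using hlen)
    exact ⟨p + 1, by simpa using hu, by simpa using hv, by simpa using ht,
      by simpa using hlt⟩

private lemma lex_of_firstdiff : ∀ (p : ℕ) {u v : List Λ}
    (hu : p < u.length) (hv : p < v.length),
    u.take p = v.take p → u[p] < v[p] → List.Lex (· < ·) u v := by
  intro p
  induction p with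
  | zero =>
    intro u v hu hv _ hlt
    cases u with
    | nil => simp at hu
    | cons a u' =>
      cases v with
      | nil => simp at hv
      | cons b v' => exact List.Lex.rel (by simpa using hlt)
  | succ p ih =>
    intro u v hu hv ht hlt
    cases u with
    | nil => simp at hu
    | cons a u' =>
      cases v with
      | nil => simp at hv
      | cons b v' =>
        rw [List.take_succ_cons, List.take_succ_cons] at ht
        injection ht with h1 h2
        subst h1
        exact List.Lex.cons (ih (by simpa using hu) (by simpa using hv) h2
          (by simpa using hlt))

private lemma indexOf_append_cons (l₁ l₂ : List P) (y : P) (h : y ∉ l₁) :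
    (l₁ ++ y :: l₂).idxOf y = l₁.length := by
  induction l₁ with
  | nil => simp
  | cons a t ih =>
    have ha : a ≠ y := fun e => h (by simp [e])
    have ht : y ∉ t := fun hm => h (List.mem_cons_of_mem _ hm)
    simp only [List.cons_append, List.idxOf_cons_ne _ ha, ih ht, List.length_cons]

private lemma maxchain_pairwise (n : MaxChain P) : n.elems.Pairwise (· < ·) :=
  List.isChain_iff_pairwise.mp (n.chain'.imp fun _ _ h => h.lt)

private lemma restrLabels_getElem (lab : MaxChain P → ℕ → Λ) (n : MaxChain P)
    (N p : ℕ) (h : p < (restrLabels lab n 0 N).length) :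
    (restrLabels lab n 0 N)[p] = lab n p := by
  simp [restrLabels] at h ⊢

private lemma restrLabels_length (lab : MaxChain P → ℕ → Λ) (n : MaxChain P)
    (N : ℕ) : (restrLabels lab n 0 N).length = N := by
  simp [restrLabels]

private lemma restrLabels_take (lab : MaxChain P → ℕ → Λ) (n : MaxChain P)
    (N p : ℕ) (h : p ≤ N) :
    (restrLabels lab n 0 N).take p = (List.range p).map fun q => lab n q := by
  unfold restrLabels
  rw [← List.map_take, List.take_range]
  have h2 : p ⊓ (N - 0) = p := inf_eq_left.mpr (by omega)
  rw [h2]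
  exact List.map_congr_left fun q _ => by simp

private lemma polygon_key (lab : MaxChain P → ℕ → Λ) (hCL : IsCLLabeling lab)
    {n n' : MaxChain P} (hm : PolygonMove lab n n') :
    ∃ p : ℕ, n.elems.take (p + 1) = n'.elems.take (p + 1) ∧
      (∀ j, j < p → lab n j = lab n' j) ∧ lab n p < lab n' p := by
  obtain ⟨a, c, b, x, w, y, he, he', hc0, hwc, hasc, hdes⟩ := hm
  have hclen : 1 ≤ c.length := List.length_pos_iff.mpr hc0
  have he1 : n.elems = (a ++ [x]) ++ (c ++ y :: b) := by rw [he]; simp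
  have he2 : n.elems = (a ++ x :: c) ++ y :: b := by rw [he]; simp
  have he3 : n.elems = (a ++ x :: (c ++ [y])) ++ b := by rw [he]; simp
  have he1' : n'.elems = (a ++ [x]) ++ (w :: y :: b) := by rw [he']; simp
  have he2' : n'.elems = (a ++ [x, w]) ++ y :: b := by rw [he']; simp
  have he3' : n'.elems = (a ++ [x, w, y]) ++ b := by rw [he']; simp
  set r : List P := a ++ [x] with hr
  have hrlen : r.length = a.length + 1 := by simp [hr]
  have htk : n.elems.take (a.length + 1) = r := by
    rw [he1]; exact List.take_left' hrlen
  have htk' : n'.elems.take (a.length + 1) = r := by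
    rw [he1']; exact List.take_left' hrlen
  have htkeq : n.elems.take (a.length + 1) = n'.elems.take (a.length + 1) := by
    rw [htk, htk']
  have hpw : n.elems.Pairwise (· < ·) := maxchain_pairwise n
  have hpw' : n'.elems.Pairwise (· < ·) := maxchain_pairwise n'
  have hyn : y ∉ a ++ x :: c := by
    rw [he2] at hpw
    have h3 := (List.pairwise_append.mp hpw).2.2
    intro hmem
    exact absurd rfl (ne_of_lt (h3 y hmem y (by simp)))
  have hyn' : y ∉ a ++ [x, w] := by
    rw [he2'] at hpw'
    have h3 := (List.pairwise_append.mp hpw').2.2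
    intro hmem
    exact absurd rfl (ne_of_lt (h3 y hmem y (by simp)))
  have hidx : n.elems.idxOf y = a.length + (c.length + 1) := by
    rw [he2, indexOf_append_cons _ _ _ hyn]
    simp only [List.length_append, List.length_cons]
  have hidx' : n'.elems.idxOf y = a.length + 2 := by
    rw [he2', indexOf_append_cons _ _ _ hyn']
    simp only [List.length_append, List.length_cons, List.length_nil]
  have hxy : x < y := by
    rw [he1'] at hpw'
    exact (List.pairwise_append.mp hpw').2.2 x (by simp [hr]) y (by simp)
  have hroot : IsRootTo r x := by
    refine ⟨?_, ?_, List.getLast?_concat⟩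
    · have h4 := n.chain'.take (a.length + 1)
      rwa [htk] at h4
    · have h5 : n.elems.head? = r.head? := by
        rw [he1, List.head?_append]
        cases hh : r.head? with
        | none =>
          rw [List.head?_eq_none_iff] at hh
          simp [hr] at hh
        | some z => simp
      rw [← h5]
      exact n.head_bot
  have hCLAt := hCL.2 r x y hroot hxy
  have hin : InRooted n r y := by
    refine ⟨by rw [hrlen]; exact htk, ?_⟩
    rw [he2]; simp
  have hin' : InRooted n' r y := by
    refine ⟨by rw [hrlen]; exact htk', ?_⟩
    rw [he2']; simp
  have hrl1 : r.length - 1 = a.length := by rw [hrlen]; omega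
  have hascn : RestrAscending lab n (r.length - 1) (n.elems.idxOf y) := by
    rw [hrl1, hidx]
    have h6 : a.length + (c.length + 1) = a.length + c.length + 1 := by omega
    rw [h6]
    exact hasc
  have hrc : restrictChain n r y = x :: (c ++ [y]) := by
    unfold restrictChain
    rw [hidx, hrl1]
    have h1 : n.elems.take (a.length + (c.length + 1) + 1) = a ++ x :: (c ++ [y]) := by
      rw [he3]
      refine List.take_left' ?_
      simp only [List.length_append, List.length_cons, List.length_nil]
      try omega
    rw [h1]
    exact List.drop_left' rfl
  have hrc' : restrictChain n' r y = [x, w, y] := by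
    unfold restrictChain
    rw [hidx', hrl1]
    have h1 : n'.elems.take (a.length + 2 + 1) = a ++ [x, w, y] := by
      rw [he3']
      refine List.take_left' ?_
      simp only [List.length_append, List.length_cons, List.length_nil]
      try omega
    rw [h1]
    exact List.drop_left' rfl
  have hne : restrictChain n r y ≠ restrictChain n' r y := by
    rw [hrc, hrc']
    intro hcon
    have h2 : c ++ [y] = [w, y] := by injection hcon
    rcases c with _ | ⟨e, t⟩
    · exact hc0 rfl
    · rw [List.cons_append] at h2
      injection h2 with h3 h4
      subst h3
      exact hwc (by simp)
  have hlex := hCLAt.2.2 n n' hin hin' hascn hne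
  have hword : restrLabels lab n (r.length - 1) (n.elems.idxOf y)
      = (List.range (c.length + 1)).map fun k => lab n (a.length + k) := by
    unfold restrLabels
    rw [hrl1, hidx, Nat.add_sub_cancel_left]
  have hword' : restrLabels lab n' (r.length - 1) (n'.elems.idxOf y)
      = (List.range 2).map fun k => lab n' (a.length + k) := by
    unfold restrLabels
    rw [hrl1, hidx', Nat.add_sub_cancel_left]
  rw [hword, hword'] at hlex
  have hlen2 : ((List.range 2).map fun k => lab n' (a.length + k)).length ≤
      ((List.range (c.length + 1)).map fun k => lab n (a.length + k)).length := by
    simp only [List.length_map, List.length_range]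
    omega
  obtain ⟨p, hu, hv, htp, hlt⟩ := exists_firstdiff hlex hlen2
  have hp2 : p < 2 := by simpa using hv
  refine ⟨a.length, htkeq, fun j hj => hCL.1 n n' a.length htkeq j hj, ?_⟩
  obtain rfl | rfl : p = 0 ∨ p = 1 := by omega
  · simpa using hlt
  · have h00 : lab n a.length = lab n' a.length := by
      have h1 := congrArg (fun l => l[0]?) htp
      simpa using h1
    have hA : lab n a.length ≤ lab n (a.length + 1) := hasc a.length le_rfl (by omega)
    have h7 : lab n' a.length < lab n' (a.length + 1) := by
      rw [← h00]
      exact lt_of_le_of_lt hA (by simpa using hlt)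
    exact absurd h7.le hdes

end Statement9Helpers

/-- if `m` and `m'` agree in their bottom `i` elements but the
elements covering the top of that common part differ, then every maximal chain
appearing in a sequence of polygon moves from `m` to `m'` agrees with `m` in
its bottom `i` elements. -/
theorem statement9 [Fintype P] (lab : MaxChain P → ℕ → Λ) (hCL : IsCLLabeling lab)
    (m m' : MaxChain P) (i : ℕ) (hi : 1 ≤ i)
    (hpre : m.elems.take i = m'.elems.take i)
    (hdiff : ∃ z z' : P, m.elems[i]? = some z ∧ m'.elems[i]? = some z' ∧ z ≠ z')
    (k : ℕ) (f : ℕ → MaxChain P) (h0 : f 0 = m) (hlast : f (k + 1) = m')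
    (hstep : ∀ j ≤ k, PolygonMove lab (f j) (f (j + 1))) :
    ∀ j, 1 ≤ j → j ≤ k → (f j).elems.take i = m.elems.take i := by
  have Wtake : ∀ n n' : MaxChain P, n.elems.take i = n'.elems.take i →
      restrLabels lab n 0 (i - 1) = restrLabels lab n' 0 (i - 1) := by
    intro n n' h
    unfold restrLabels
    refine List.map_congr_left ?_
    intro q hq
    rw [List.mem_range] at hq
    exact hCL.1 n n' (i - 1) (by rwa [Nat.sub_add_cancel hi]) (0 + q) (by omega)
  have step : ∀ t, t ≤ k →
      ((f (t + 1)).elems.take i = (f t).elems.take i ∧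
        restrLabels lab (f (t + 1)) 0 (i - 1) = restrLabels lab (f t) 0 (i - 1)) ∨
      List.Lex (· < ·) (restrLabels lab (f t) 0 (i - 1))
        (restrLabels lab (f (t + 1)) 0 (i - 1)) := by
    intro t ht
    obtain ⟨p, htk, hlabs, hlt⟩ := polygon_key lab hCL (hstep t ht)
    by_cases hip : i ≤ p + 1
    · left
      have e1 : ∀ l : List P, List.take i l = List.take i (List.take (p + 1) l) := by
        intro l; rw [List.take_take, inf_eq_left.mpr hip]
      have h1 : (f t).elems.take i = (f (t + 1)).elems.take i := by
        rw [e1, htk, ← e1]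
      exact ⟨h1.symm, Wtake _ _ h1.symm⟩
    · right
      have hp1 : p < i - 1 := by omega
      refine lex_of_firstdiff p (by rw [restrLabels_length]; omega)
        (by rw [restrLabels_length]; omega) ?_ ?_
      · rw [restrLabels_take _ _ _ _ (by omega), restrLabels_take _ _ _ _ (by omega)]
        exact List.map_congr_left fun q hq => hlabs q (List.mem_range.mp hq)
      · rw [restrLabels_getElem, restrLabels_getElem]
        exact hlt
  have prop : ∀ d t, t + d = k + 1 →
      List.Lex (· < ·) (restrLabels lab m 0 (i - 1)) (restrLabels lab (f t) 0 (i - 1)) →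
      False := by
    intro d
    induction d with
    | zero =>
      intro t ht hlex
      have h1 : t = k + 1 := by omega
      subst h1
      rw [hlast, ← Wtake m m' hpre] at hlex
      exact lex_irrefl' _ hlex
    | succ d ih =>
      intro t ht hlex
      rcases step t (by omega) with ⟨_, hWeq⟩ | hl
      · exact ih (t + 1) (by omega) (by rwa [hWeq])
      · exact ih (t + 1) (by omega) (lex_trans' hlex hl)
  have Qall : ∀ t, t ≤ k + 1 → (f t).elems.take i = m.elems.take i := by
    intro t
    induction t with
    | zero => intro _; rw [h0]
    | succ t ih =>
      intro ht
      have hQ := ih (by omega)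
      rcases step t (by omega) with ⟨he, _⟩ | hl
      · rw [he, hQ]
      · exfalso
        refine prop (k - t) (t + 1) (by omega) ?_
        rwa [Wtake _ _ hQ] at hl
  intro j hj1 hjk
  exact Qall j (by omega)
end
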